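/- arXiv:2001.07978 — 4 statements merged into one kernel-verified Lean document; each statement's English description precedes it below -/
import Mathlib

section
/- Let n ≥ 1. In the polynomial ring ℤ[X], the ideal generated by the set {C(n,r)·X^r : 1 ≤ r ≤ n} (where C(n,r) is the binomial coefficient) is equal to the ideal generated by the set {b_{n,r}·X^r : 1 ≤ r ≤ n}, where b_{n,r} := gcd{C(n,1), C(n,2), …, C(n,r)}. -/
open Polynomial

/-- `bnr n r = gcd {C(n,1), …, C(n,r)}`. -/
def bnr (n r : ℕ) : ℕ := (Finset.Icc 1 r).gcd (n.choose ·)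

theorem Finset.gcd_Icc_one_succ (a : ℕ → ℕ) (k : ℕ) :
    (Finset.Icc 1 (k + 1)).gcd a = Nat.gcd (a (k + 1)) ((Finset.Icc 1 k).gcd a) := by
  rw [← Finset.insert_Icc_right_eq_Icc_add_one (by omega), Finset.gcd_insert]
  rfl

namespace Ideal

variable {R : Type*} [CommRing R] {I : Ideal R} {x : R}

theorem zsmul_mem_of_dvd {a b : ℤ} (hab : a ∣ b) (hx : a • x ∈ I) : b • x ∈ I := by
  obtain ⟨c, rfl⟩ := hab
  rw [mul_comm, mul_smul]
  exact zsmul_mem hx c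

/-- Bézout: `gcd a b = a u + b v`, and the extra factor `x` lifts `b • x ^ k` to degree `k + 1`. -/
theorem gcd_smul_pow_succ_mem {a b : ℤ} {k : ℕ} (ha : a • x ^ (k + 1) ∈ I)
    (hb : b • x ^ k ∈ I) : (Int.gcd a b : ℤ) • x ^ (k + 1) ∈ I := by
  have hsplit : (Int.gcd a b : ℤ) • x ^ (k + 1) =
      Int.gcdA a b • (a • x ^ (k + 1)) + x * (Int.gcdB a b • (b • x ^ k)) := by
    rw [Int.gcd_eq_gcd_ab]
    simp only [zsmul_eq_mul, Int.cast_add, Int.cast_mul]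
    ring
  rw [hsplit]
  exact add_mem (zsmul_mem ha _) (mul_mem_left _ x (zsmul_mem hb _))

theorem span_smul_pow_eq_span_gcd_smul_pow (n : ℕ) (x : R) (a : ℕ → ℕ) :
    span {p : R | ∃ r : ℕ, 1 ≤ r ∧ r ≤ n ∧ p = (a r : ℤ) • x ^ r} =
    span {p : R | ∃ r : ℕ, 1 ≤ r ∧ r ≤ n ∧ p = (((Finset.Icc 1 r).gcd a : ℕ) : ℤ) • x ^ r} := by
  apply le_antisymm <;> rw [span_le]
  · rintro _ ⟨r, hr, hrn, rfl⟩
    refine zsmul_mem_of_dvd ?_ (subset_span ⟨r, hr, hrn, rfl⟩)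
    exact Int.natCast_dvd_natCast.2 (Finset.gcd_dvd (Finset.mem_Icc.2 ⟨hr, le_rfl⟩))
  · rintro _ ⟨r, -, hrn, rfl⟩
    induction r with
    | zero => simp
    | succ k ih =>
      rw [Finset.gcd_Icc_one_succ, ← Int.gcd_natCast_natCast]
      exact gcd_smul_pow_succ_mem (subset_span ⟨k + 1, by omega, hrn, rfl⟩) (ih (by omega))

end Ideal

theorem ideal_span_choose_eq_span_gcd_general (n : ℕ) :
    Ideal.span {p : Polynomial ℤ | ∃ r : ℕ, 1 ≤ r ∧ r ≤ n ∧
        p = (n.choose r : ℤ) • X ^ r} =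
    Ideal.span {p : Polynomial ℤ | ∃ r : ℕ, 1 ≤ r ∧ r ≤ n ∧
        p = (bnr n r : ℤ) • X ^ r} :=
  Ideal.span_smul_pow_eq_span_gcd_smul_pow n X n.choose

/-- In `ℤ[X]`, the ideal generated by `{C(n,r)·X^r : 1 ≤ r ≤ n}` equals the ideal
generated by `{b_{n,r}·X^r : 1 ≤ r ≤ n}`. -/
theorem ideal_span_choose_eq_span_gcd (n : ℕ) (hn : 1 ≤ n) :
    Ideal.span {p : Polynomial ℤ | ∃ r : ℕ, 1 ≤ r ∧ r ≤ n ∧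
        p = (n.choose r : ℤ) • X ^ r} =
    Ideal.span {p : Polynomial ℤ | ∃ r : ℕ, 1 ≤ r ∧ r ≤ n ∧
        p = (bnr n r : ℤ) • X ^ r} :=
  ideal_span_choose_eq_span_gcd_general n
end

section
/- Let n ≥ 1 and let I_n ⊆ ℤ[X] be the ideal generated by {C(n,j)·X^j : 1 ≤ j ≤ n}. Then for every r with 1 ≤ r ≤ n and every integer m, the element m·X^r lies in I_n if and only if b_{n,r} divides m, where b_{n,r} := gcd{C(n,1), C(n,2), …, C(n,r)}. In particular, the additive order of the residue class of X^r in the quotient ring ℤ[X]/I_n is exactly b_{n,r}. -/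
/-!
Every generator `C(n,j) • X^j` has all its coefficients of degree `≤ r` divisible by `b_{n,r}`,
a property inherited by the whole ideal, so `m • X^r ∈ I_n` forces `b_{n,r} ∣ m`. Conversely,
for `1 ≤ j ≤ r` we have `C(n,j) • X^r = X^(r-j) * (C(n,j) • X^j) ∈ I_n`, and the integers `m`
with `m • X^r ∈ I_n` form an ideal of the principal ideal ring `ℤ`, which therefore contains the
gcd `b_{n,r}` of the `C(n,j)`.
-/

open Polynomial

/-- `In n` is the ideal of `ℤ[X]` generated by `{C(n,j)·X^j : 1 ≤ j ≤ n}`. -/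
noncomputable def In (n : ℕ) : Ideal (Polynomial ℤ) :=
  Ideal.span {p : Polynomial ℤ | ∃ j : ℕ, 1 ≤ j ∧ j ≤ n ∧ p = (n.choose j : ℤ) • X ^ j}

theorem Ideal.natCast_finset_gcd_mem {ι : Type*} (K : Ideal ℤ) (s : Finset ι) (f : ι → ℕ)
    (h : ∀ i ∈ s, (f i : ℤ) ∈ K) : ((s.gcd f : ℕ) : ℤ) ∈ K := by
  simp only [Submodule.IsPrincipal.mem_iff_generator_dvd, Int.dvd_natCast] at h ⊢
  exact Finset.dvd_gcd h

theorem AddSubgroup.natCast_finset_gcd_zsmul_mem {ι M : Type*} [AddCommGroup M]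
    (N : AddSubgroup M) (x : M) (s : Finset ι) (f : ι → ℕ) (h : ∀ i ∈ s, (f i : ℤ) • x ∈ N) :
    ((s.gcd f : ℕ) : ℤ) • x ∈ N :=
  Submodule.mem_colon_singleton.mp <|
    Ideal.natCast_finset_gcd_mem (N.toIntSubmodule.colon {x}) s f fun i hi ↦
      Submodule.mem_colon_singleton.mpr (h i hi)

theorem Polynomial.dvd_coeff_of_mem_span {R : Type*} [CommSemiring R] {d : R} {r : ℕ}
    {S : Set R[X]} (hS : ∀ p ∈ S, ∀ k ≤ r, d ∣ p.coeff k) {p : R[X]} (hp : p ∈ Ideal.span S) :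
    ∀ k ≤ r, d ∣ p.coeff k := by
  induction hp using Submodule.span_induction with
  | mem p hp => exact hS p hp
  | zero => simp
  | add p q _ _ hp hq => exact fun k hk ↦ (coeff_add p q k).symm ▸ dvd_add (hp k hk) (hq k hk)
  | smul a p _ hp =>
    intro k hk
    rw [smul_eq_mul, coeff_mul]
    exact Finset.dvd_sum fun ij hij ↦ dvd_mul_of_dvd_right
      (hp ij.2 ((Finset.HasAntidiagonal.antidiagonal.snd_le hij).trans hk)) _

theorem bnr_dvd_coeff_of_mem_In {n r : ℕ} {p : ℤ[X]} (hp : p ∈ In n) :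
    ∀ k ≤ r, (bnr n r : ℤ) ∣ p.coeff k := by
  refine dvd_coeff_of_mem_span ?_ hp
  rintro _ ⟨j, hj1, -, rfl⟩ k hk
  rw [coeff_smul, coeff_X_pow, smul_eq_mul]
  split_ifs with hkj
  · subst hkj
    rw [mul_one, Int.natCast_dvd_natCast]
    exact Finset.gcd_dvd (Finset.mem_Icc.mpr ⟨hj1, hk⟩)
  · simp

theorem choose_zsmul_X_pow_mem_In {n r j : ℕ} (hrn : r ≤ n) (hj : j ∈ Finset.Icc 1 r) :
    (n.choose j : ℤ) • (X : ℤ[X]) ^ r ∈ In n := by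
  obtain ⟨hj1, hjr⟩ := Finset.mem_Icc.mp hj
  have hgen : (n.choose j : ℤ) • (X : ℤ[X]) ^ j ∈ In n :=
    Ideal.subset_span ⟨j, hj1, hjr.trans hrn, rfl⟩
  rw [← Nat.sub_add_cancel hjr, pow_add, ← mul_smul_comm]
  exact Ideal.mul_mem_left _ _ hgen

theorem zsmul_X_pow_mem_In_iff {n r : ℕ} (hrn : r ≤ n) (m : ℤ) :
    m • (X : ℤ[X]) ^ r ∈ In n ↔ (bnr n r : ℤ) ∣ m := by
  refine ⟨fun hm ↦ by simpa using bnr_dvd_coeff_of_mem_In hm r le_rfl, ?_⟩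
  rintro ⟨t, rfl⟩
  have hb : (bnr n r : ℤ) • (X : ℤ[X]) ^ r ∈ In n :=
    (In n).toAddSubgroup.natCast_finset_gcd_zsmul_mem _ _ _ fun j hj ↦
      choose_zsmul_X_pow_mem_In hrn hj
  rw [mul_comm, mul_smul]
  exact zsmul_mem hb t

theorem mem_In_iff_and_addOrderOf_general (n : ℕ) (r : ℕ) (hrn : r ≤ n) :
    (∀ m : ℤ, m • (X : Polynomial ℤ) ^ r ∈ In n ↔ (bnr n r : ℤ) ∣ m) ∧
    addOrderOf (Ideal.Quotient.mk (In n) (X ^ r)) = bnr n r := by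
  refine ⟨zsmul_X_pow_mem_In_iff hrn, Nat.dvd_right_iff_eq.mp fun m ↦ ?_⟩
  rw [addOrderOf_dvd_iff_nsmul_eq_zero, ← map_nsmul, Ideal.Quotient.eq_zero_iff_mem,
    ← natCast_zsmul, zsmul_X_pow_mem_In_iff hrn, Int.natCast_dvd_natCast]

/-- For `1 ≤ r ≤ n` and any integer `m`, `m·X^r ∈ I_n` iff `b_{n,r} ∣ m`; in particular
the additive order of the class of `X^r` in `ℤ[X]/I_n` is exactly `b_{n,r}`. -/
theorem mem_In_iff_and_addOrderOf (n : ℕ) (hn : 1 ≤ n) (r : ℕ) (hr1 : 1 ≤ r) (hrn : r ≤ n) :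
    (∀ m : ℤ, m • (X : Polynomial ℤ) ^ r ∈ In n ↔ (bnr n r : ℤ) ∣ m) ∧
    addOrderOf (Ideal.Quotient.mk (In n) (X ^ r)) = bnr n r :=
  mem_In_iff_and_addOrderOf_general n r hrn
end

section
/- Let n ≥ 2 and let 1 ≤ k ≤ n−1, and set b_{n,r} := gcd{C(n,1), C(n,2), …, C(n,r)}. If k+1 = p^s for some prime p and integer s ≥ 1 with p^s dividing n, then b_{n,k} = p·b_{n,k+1}; otherwise b_{n,k} = b_{n,k+1}. (The prime p, if it exists, is unique.) -/
namespace Nat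

variable {p n m j : ℕ}

theorem pow_factorization_sub_dvd_choose (hj : j ≠ 0) :
    p ^ (n.factorization p - j.factorization p) ∣ n.choose j := by
  rcases lt_or_ge n j with hnj | hjn
  · simp [choose_eq_zero_of_lt hnj]
  have := factorization_le_factorization_choose_add (p := p) hjn hj
  exact (pow_dvd_pow p (by omega)).trans (ordProj_dvd _ p)

theorem Prime.dvd_choose_of_pow_dvd (hp : p.Prime) (hpn : p ^ m ∣ n) (hj0 : j ≠ 0)
    (hjm : j < p ^ m) : p ∣ n.choose j := by
  rcases eq_or_ne n 0 with rfl | hn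
  · rw [choose_eq_zero_of_lt (pos_of_ne_zero hj0)]
    exact dvd_zero p
  have hvj : j.factorization p < m :=
    (Nat.pow_lt_pow_iff_right hp.one_lt).1 ((ordProj_le p hj0).trans_lt hjm)
  have hmn : m ≤ n.factorization p := (hp.pow_dvd_iff_le_factorization hn).1 hpn
  exact (dvd_pow_self p (by omega)).trans (pow_factorization_sub_dvd_choose hj0)

theorem Prime.cast_choose_eq_neg_one_pow (hp : p.Prime) (hpn : p ^ m ∣ n + 1) :
    ∀ j < p ^ m, (n.choose j : ZMod p) = (-1) ^ j
  | 0, _ => by simp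
  | j + 1, hj => by
    have hvanish := hp.dvd_choose_of_pow_dvd hpn j.succ_ne_zero hj
    rw [← ZMod.natCast_eq_zero_iff, choose_succ_succ', cast_add,
      hp.cast_choose_eq_neg_one_pow hpn j (by omega)] at hvanish
    linear_combination hvanish

theorem Prime.factorization_choose_pow_add (hp : p.Prime) (hn : n ≠ 0) (hpn : p ^ m ∣ n) :
    (n.choose (p ^ m)).factorization p + m = n.factorization p := by
  obtain ⟨N, rfl⟩ := exists_eq_add_one_of_ne_zero hn
  have : Fact p.Prime := ⟨hp⟩
  have hpm : p ^ m ≤ N + 1 := le_of_dvd N.succ_pos hpn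
  have hpm0 : 1 ≤ p ^ m := one_le_pow _ _ hp.pos
  have hunit : ¬ p ∣ N.choose (p ^ m - 1) := by
    rw [← ZMod.natCast_eq_zero_iff, hp.cast_choose_eq_neg_one_pow hpn _ (by omega)]
    exact pow_ne_zero _ (neg_ne_zero.2 one_ne_zero)
  have key := add_one_mul_choose_eq N (p ^ m - 1)
  rw [Nat.sub_add_cancel hpm0] at key
  have := congrArg (·.factorization p) key
  rw [factorization_mul hn (choose_pos (by omega)).ne',
    factorization_mul (choose_pos hpm).ne' (pow_ne_zero m hp.ne_zero)] at this
  simp only [Finsupp.add_apply, factorization_eq_zero_of_not_dvd hunit, hp.factorization_pow,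
    Finsupp.single_eq_same] at this
  omega

theorem log_add_one_of_add_one_eq_pow {b k s : ℕ} (hb : 1 < b) (hk : k ≠ 0)
    (h : k + 1 = b ^ s) : log b k + 1 = s := by
  have hs : log b (k + 1) = s := h ▸ log_pow hb s
  have hlt : log b k < s := hs ▸ (log_lt_log_succ_iff hb hk).2 (by rw [hs, h])
  have hle : s ≤ log b k + 1 := (Nat.pow_le_pow_iff_right hb).1 (h ▸ lt_pow_succ_log_self hb k)
  omega

end Nat

open Nat

section bnr

variable {n r k p : ℕ}

theorem bnr_dvd_choose {j : ℕ} (hj1 : 1 ≤ j) (hjr : j ≤ r) : bnr n r ∣ n.choose j :=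
  Finset.gcd_dvd (Finset.mem_Icc.2 ⟨hj1, hjr⟩)

theorem bnr_ne_zero (hn : n ≠ 0) (hr : r ≠ 0) : bnr n r ≠ 0 := fun h =>
  hn (by simpa [h] using bnr_dvd_choose (n := n) le_rfl (one_le_iff_ne_zero.2 hr))

theorem factorization_bnr (hn : n ≠ 0) (hr : r ≠ 0) (p : ℕ) :
    (bnr n r).factorization p = n.factorization p - log p r := by
  by_cases hp : p.Prime
  swap
  · simp only [factorization_eq_zero_of_not_prime _ hp, Nat.zero_sub]
  apply le_antisymm
  · set m := min (log p r) (n.factorization p) with hm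
    have hpm : p ^ m ∣ n := (pow_dvd_pow p (min_le_right _ _)).trans (ordProj_dvd n p)
    have hmr : p ^ m ≤ r :=
      (Nat.pow_le_pow_right hp.pos (min_le_left _ _)).trans (pow_log_le_self p hr)
    have hle := factorization_le_factorization_of_dvd_right (a := p)
      (bnr_dvd_choose (n := n) (one_le_pow _ _ hp.pos) hmr) (bnr_ne_zero hn hr)
      (choose_pos (le_of_dvd (pos_of_ne_zero hn) hpm)).ne'
    have := hp.factorization_choose_pow_add hn hpm
    omega
  · rw [← hp.pow_dvd_iff_le_factorization (bnr_ne_zero hn hr)]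
    refine Finset.dvd_gcd fun j hj => ?_
    obtain ⟨hj1, hjr⟩ := Finset.mem_Icc.1 hj
    have hvj : j.factorization p ≤ log p r :=
      le_log_of_pow_le hp.one_lt ((ordProj_le p (by omega)).trans hjr)
    exact (pow_dvd_pow p (by omega)).trans (pow_factorization_sub_dvd_choose (by omega))

theorem factorization_bnr_eq_succ_add_one (hn : n ≠ 0) (hk : k ≠ 0) (hp : p.Prime) {s : ℕ}
    (hks : k + 1 = p ^ s) (hps : p ^ s ∣ n) :
    (bnr n k).factorization p = (bnr n (k + 1)).factorization p + 1 := by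
  rw [factorization_bnr hn hk, factorization_bnr hn k.add_one_ne_zero, hks, log_pow hp.one_lt]
  have := log_add_one_of_add_one_eq_pow hp.one_lt hk hks
  have := (hp.pow_dvd_iff_le_factorization hn).1 hps
  omega

theorem factorization_bnr_eq_succ (hn : n ≠ 0) (hk : k ≠ 0) (hp : p.Prime)
    (h : ∀ s, 1 ≤ s → k + 1 = p ^ s → ¬ p ^ s ∣ n) :
    (bnr n k).factorization p = (bnr n (k + 1)).factorization p := by
  rw [factorization_bnr hn hk, factorization_bnr hn k.add_one_ne_zero]
  by_cases hlog : log p k = log p (k + 1)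
  · rw [hlog]
  have hpow : k + 1 = p ^ log p (k + 1) := by
    by_contra hne
    exact hlog ((log_eq_log_succ_iff hp.one_lt hk).2 (Ne.symm hne))
  have hs := log_add_one_of_add_one_eq_pow hp.one_lt hk hpow
  have := mt (hp.pow_dvd_iff_le_factorization hn).2 (h _ (by omega) hpow)
  omega

end bnr

theorem bnr_ratio_general (n : ℕ) (hn : 2 ≤ n) (k : ℕ) (hk1 : 1 ≤ k) :
    (∀ p s : ℕ, p.Prime → 1 ≤ s → k + 1 = p ^ s → p ^ s ∣ n →
        bnr n k = p * bnr n (k + 1)) ∧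
    ((¬ ∃ p s : ℕ, p.Prime ∧ 1 ≤ s ∧ k + 1 = p ^ s ∧ p ^ s ∣ n) →
        bnr n k = bnr n (k + 1)) := by
  have hn0 : n ≠ 0 := by omega
  have hk0 : k ≠ 0 := by omega
  have hB := bnr_ne_zero hn0 hk0
  have hB' := bnr_ne_zero hn0 k.add_one_ne_zero
  refine ⟨fun p s hp _ hks hps => ?_, fun hno => ?_⟩
  · refine eq_of_factorization_eq hB (mul_ne_zero hp.ne_zero hB') fun q => ?_
    by_cases hq : q.Prime
    swap
    · simp only [factorization_eq_zero_of_not_prime _ hq]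
    rw [Nat.factorization_mul hp.ne_zero hB', Finsupp.add_apply, hp.factorization]
    rcases eq_or_ne p q with rfl | hpq
    · rw [factorization_bnr_eq_succ_add_one hn0 hk0 hp hks hps, Finsupp.single_eq_same, add_comm]
    · rw [Finsupp.single_eq_of_ne' hpq, zero_add]
      refine factorization_bnr_eq_succ hn0 hk0 hq fun s' hs' hks' _ => hpq ?_
      have hqp : q ∣ p ^ s := hks ▸ hks' ▸ dvd_pow_self q (by omega)
      exact ((prime_dvd_prime_iff_eq hq hp).1 (hq.dvd_of_dvd_pow hqp)).symm
  · refine eq_of_factorization_eq hB hB' fun q => ?_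
    by_cases hq : q.Prime
    · exact factorization_bnr_eq_succ hn0 hk0 hq
        fun s hs hks hqs => hno ⟨q, s, hq, hs, hks, hqs⟩
    · simp only [factorization_eq_zero_of_not_prime _ hq]

/-- If `k+1 = p^s` for a prime `p` with `s ≥ 1` and `p^s ∣ n`, then
`b_{n,k} = p·b_{n,k+1}`; otherwise `b_{n,k} = b_{n,k+1}`. -/
theorem bnr_ratio (n : ℕ) (hn : 2 ≤ n) (k : ℕ) (hk1 : 1 ≤ k) (hk : k ≤ n - 1) :
    (∀ p s : ℕ, p.Prime → 1 ≤ s → k + 1 = p ^ s → p ^ s ∣ n →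
        bnr n k = p * bnr n (k + 1)) ∧
    ((¬ ∃ p s : ℕ, p.Prime ∧ 1 ≤ s ∧ k + 1 = p ^ s ∧ p ^ s ∣ n) →
        bnr n k = bnr n (k + 1)) :=
  bnr_ratio_general n hn k hk1
end

section
/- Let n ≥ 2, let p be a prime, and set b_{n,r} := gcd{C(n,1), C(n,2), …, C(n,r)}. Then the number of indices k with 1 ≤ k ≤ n−1 and b_{n,k} = p·b_{n,k+1} equals v_p(n), the p-adic valuation of n. -/
open Finset

theorem Nat.coprime_choose_of_dvd_choose_add_one {d n j : ℕ}
    (h : ∀ i ∈ Icc 1 j, d ∣ (n + 1).choose i) : d.Coprime (n.choose j) := by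
  induction j with
  | zero => simp
  | succ j ih =>
    have hj : d.Coprime (n.choose j) := ih fun i hi => h i (Icc_subset_Icc_right j.le_succ hi)
    have hsum : d ∣ n.choose j + n.choose (j + 1) :=
      Nat.choose_succ_succ' n j ▸ h (j + 1) (by simp)
    have hg : d.gcd (n.choose (j + 1)) ∣ d.gcd (n.choose j) :=
      Nat.dvd_gcd (Nat.gcd_dvd_left _ _) <|
        (Nat.dvd_add_left (Nat.gcd_dvd_right _ _)).mp ((Nat.gcd_dvd_left _ _).trans hsum)
    rw [hj.gcd_eq_one] at hg
    exact Nat.dvd_one.mp hg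

/-- `j · C(n, j) = n · C(n - 1, j - 1)`, divided through by `gcd n j`. -/
theorem Nat.div_gcd_mul_choose_pred {n j : ℕ} (hn : 0 < n) (hj : 0 < j) :
    n / n.gcd j * (n - 1).choose (j - 1) = n.choose j * (j / n.gcd j) := by
  obtain ⟨m, rfl⟩ := Nat.exists_add_one_eq.mpr hn
  obtain ⟨i, rfl⟩ := Nat.exists_add_one_eq.mpr hj
  apply Nat.eq_of_mul_eq_mul_left (Nat.gcd_pos_of_pos_left _ hn)
  rw [← mul_assoc, Nat.mul_div_cancel' (Nat.gcd_dvd_left _ _), mul_left_comm,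
    Nat.mul_div_cancel' (Nat.gcd_dvd_right _ _), add_tsub_cancel_right, add_tsub_cancel_right]
  exact Nat.add_one_mul_choose_eq m i

theorem Nat.div_gcd_dvd_choose {n j : ℕ} (hn : 0 < n) (hj : 0 < j) :
    n / n.gcd j ∣ n.choose j :=
  (Nat.coprime_div_gcd_div_gcd (Nat.gcd_pos_of_pos_left _ hn)).dvd_of_dvd_mul_right
    ⟨_, (Nat.div_gcd_mul_choose_pred hn hj).symm⟩

theorem bnr_dvd_choose_s10 {n r i : ℕ} (hi : i ∈ Icc 1 r) : bnr n r ∣ n.choose i :=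
  Finset.gcd_dvd hi

theorem bnr_dvd_self {n r : ℕ} (hr : 1 ≤ r) : bnr n r ∣ n := by
  simpa using bnr_dvd_choose_s10 (n := n) (mem_Icc.mpr ⟨le_rfl, hr⟩)

theorem bnr_mul_gcd_dvd_self {n r j : ℕ} (hn : n ≠ 0) (hj : j ∈ Icc 1 r) :
    bnr n r * n.gcd j ∣ n := by
  rw [mul_comm]
  refine Nat.mul_dvd_of_dvd_div (Nat.gcd_dvd_left _ _) ?_
  have hcop : (bnr n r).Coprime ((n - 1).choose (j - 1)) :=
    Nat.coprime_choose_of_dvd_choose_add_one fun i hi => by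
      rw [Nat.sub_add_cancel (Nat.pos_of_ne_zero hn)]
      exact bnr_dvd_choose_s10 (Icc_subset_Icc_right (by grind) hi)
  refine hcop.dvd_of_dvd_mul_right ?_
  rw [Nat.div_gcd_mul_choose_pred (Nat.pos_of_ne_zero hn) (mem_Icc.mp hj).1]
  exact dvd_mul_of_dvd_left (bnr_dvd_choose_s10 hj) _

theorem Nat.factorization_gcd_lcmUpto {n q : ℕ} (hn : n ≠ 0) (hq : q.Prime) (k : ℕ) :
    (n.gcd (Nat.lcmUpto k)).factorization q = min (n.factorization q) (q.log k) := by
  rw [Nat.factorization_gcd hn (Nat.lcmUpto_ne_zero k), Finsupp.inf_apply,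
    Nat.factorization_lcmUpto k hq]

theorem bnr_mul_gcd_lcmUpto_dvd_self {n k : ℕ} (hn : n ≠ 0) (hk : 1 ≤ k) :
    bnr n k * n.gcd (Nat.lcmUpto k) ∣ n := by
  have hb : bnr n k ≠ 0 := ne_zero_of_dvd_ne_zero hn (bnr_dvd_self hk)
  refine (Nat.factorization_prime_le_iff_dvd (mul_ne_zero hb (Nat.gcd_ne_zero_left hn)) hn).mp
    fun q hq => ?_
  have hqk : q ^ q.log k ∈ Icc 1 k :=
    mem_Icc.mpr ⟨Nat.one_le_pow _ _ hq.pos, Nat.pow_log_le_self q (by omega)⟩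
  have hval := (Nat.factorization_le_iff_dvd (mul_ne_zero hb (Nat.gcd_ne_zero_left hn)) hn).mpr
    (bnr_mul_gcd_dvd_self hn hqk) q
  simpa [Nat.factorization_mul hb, Nat.gcd_ne_zero_left hn, Nat.factorization_gcd_lcmUpto hn hq,
    Nat.factorization_gcd hn (pow_ne_zero _ hq.ne_zero), hq.factorization_self] using hval

theorem dvd_bnr_mul_gcd_lcmUpto {n k : ℕ} (hn : n ≠ 0) :
    n ∣ bnr n k * n.gcd (Nat.lcmUpto k) := by
  have hdiv : n / n.gcd (Nat.lcmUpto k) ∣ bnr n k := Finset.dvd_gcd fun j hj => by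
    refine (Nat.div_dvd_div_left (Nat.gcd_dvd_left _ _) ?_).trans
      (Nat.div_gcd_dvd_choose (Nat.pos_of_ne_zero hn) (mem_Icc.mp hj).1)
    exact Nat.dvd_gcd (Nat.gcd_dvd_left _ _)
      ((Nat.gcd_dvd_right _ _).trans (Finset.dvd_lcm (s := Icc 1 k) (f := id) hj))
  calc n = n.gcd (Nat.lcmUpto k) * (n / n.gcd (Nat.lcmUpto k)) :=
        (Nat.mul_div_cancel' (Nat.gcd_dvd_left _ _)).symm
    _ ∣ n.gcd (Nat.lcmUpto k) * bnr n k := mul_dvd_mul_left _ hdiv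
    _ = bnr n k * n.gcd (Nat.lcmUpto k) := mul_comm _ _

theorem bnr_mul_gcd_lcmUpto {n k : ℕ} (hn : n ≠ 0) (hk : 1 ≤ k) :
    bnr n k * n.gcd (Nat.lcmUpto k) = n :=
  Nat.dvd_antisymm (bnr_mul_gcd_lcmUpto_dvd_self hn hk) (dvd_bnr_mul_gcd_lcmUpto hn)

theorem Nat.log_pow_sub_one {b s : ℕ} (hb : 1 < b) : Nat.log b (b ^ s - 1) = s - 1 := by
  rcases Nat.eq_zero_or_pos s with rfl | hs
  · simp
  have := Nat.pow_lt_pow_right hb (show s - 1 < s by omega)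
  have := Nat.one_le_pow (s - 1) b (by omega)
  rw [Nat.log_eq_iff (Or.inr ⟨hb, by omega⟩), Nat.sub_add_cancel hs]
  omega

theorem Nat.gcd_lcmUpto_add_one_eq_mul_iff {n p k : ℕ} (hn : n ≠ 0) (hp : p.Prime) (hk : k ≠ 0) :
    n.gcd (Nat.lcmUpto (k + 1)) = p * n.gcd (Nat.lcmUpto k) ↔
      ∃ s ∈ Icc 1 (n.factorization p), p ^ s = k + 1 := by
  constructor
  · intro h
    have hv : min (n.factorization p) (p.log (k + 1)) = 1 + min (n.factorization p) (p.log k) := by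
      simpa [Nat.factorization_mul hp.ne_zero (Nat.gcd_ne_zero_left hn),
        Nat.factorization_gcd_lcmUpto hn hp, hp.factorization_self]
        using congrArg (·.factorization p) h
    have hpow : p ^ p.log (k + 1) = k + 1 := (Nat.log_lt_log_succ_iff hp.one_lt hk).mp (by omega)
    have hlog : p.log k = p.log (k + 1) - 1 := by
      rw [← Nat.log_pow_sub_one hp.one_lt, hpow, Nat.add_sub_cancel]
    exact ⟨p.log (k + 1), mem_Icc.mpr ⟨by omega, by omega⟩, hpow⟩
  · rintro ⟨s, hs, hsk⟩
    obtain ⟨hs1, hsn⟩ := mem_Icc.mp hs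
    refine Nat.eq_of_factorization_eq (Nat.gcd_ne_zero_left hn)
      (mul_ne_zero hp.ne_zero (Nat.gcd_ne_zero_left hn)) fun q => ?_
    by_cases hq : q.Prime
    swap
    · simp [Nat.factorization_eq_zero_of_not_prime _ hq]
    rw [Nat.factorization_mul hp.ne_zero (Nat.gcd_ne_zero_left hn), Finsupp.add_apply,
      Nat.factorization_gcd_lcmUpto hn hq, Nat.factorization_gcd_lcmUpto hn hq]
    obtain rfl | hqp := eq_or_ne q p
    · have hlog_succ : q.log (k + 1) = s := by rw [← hsk, Nat.log_pow hq.one_lt]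
      have hlog : q.log k = s - 1 := by
        rw [show k = q ^ s - 1 by omega, Nat.log_pow_sub_one hq.one_lt]
      rw [hlog_succ, hlog, hq.factorization_self]
      omega
    · have hlog : q.log k = q.log (k + 1) := by
        refine (Nat.log_eq_log_succ_iff hq.one_lt hk).mpr fun hqk => hqp ?_
        have hpq : p ∣ q ^ q.log (k + 1) := by
          rw [hqk, ← hsk]
          exact dvd_pow_self p (by omega)
        exact ((Nat.prime_dvd_prime_iff_eq hp hq).mp (hp.dvd_of_dvd_pow hpq)).symm
      simp [hp.factorization, hqp.symm, hlog]

theorem bnr_eq_mul_bnr_add_one_iff {n p k : ℕ} (hn : n ≠ 0) (hp : p.Prime) (hk : 1 ≤ k) :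
    bnr n k = p * bnr n (k + 1) ↔ ∃ s ∈ Icc 1 (n.factorization p), p ^ s = k + 1 := by
  rw [← Nat.gcd_lcmUpto_add_one_eq_mul_iff hn hp (by omega)]
  have hb := bnr_mul_gcd_lcmUpto hn hk
  have hb' := bnr_mul_gcd_lcmUpto hn (show 1 ≤ k + 1 by omega)
  have hD : 0 < n.gcd (Nat.lcmUpto k) := Nat.gcd_pos_of_pos_left _ (Nat.pos_of_ne_zero hn)
  have hb'0 : 0 < bnr n (k + 1) :=
    Nat.pos_of_dvd_of_pos (bnr_dvd_self (by omega)) (Nat.pos_of_ne_zero hn)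
  constructor
  · intro h
    refine Nat.eq_of_mul_eq_mul_left hb'0 ?_
    calc _ = n := hb'
      _ = bnr n k * n.gcd (Nat.lcmUpto k) := hb.symm
      _ = _ := by rw [h]; ring
  · intro h
    refine Nat.eq_of_mul_eq_mul_right hD ?_
    calc _ = n := hb
      _ = bnr n (k + 1) * n.gcd (Nat.lcmUpto (k + 1)) := hb'.symm
      _ = _ := by rw [h]; ring

theorem Nat.pow_sub_one_injective {b : ℕ} (hb : 1 < b) : Function.Injective (b ^ · - 1) :=
  fun i j hij => by
    have := Nat.one_le_pow i b (by omega)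
    have := Nat.one_le_pow j b (by omega)
    exact Nat.pow_right_injective hb (show b ^ i = b ^ j by simp only at hij; omega)

theorem filter_bnr_eq_mul_bnr_add_one {n p : ℕ} (hn : n ≠ 0) (hp : p.Prime) :
    (Icc 1 (n - 1)).filter (fun k => bnr n k = p * bnr n (k + 1)) =
      (Icc 1 (n.factorization p)).image (p ^ · - 1) := by
  ext k
  simp only [mem_filter, mem_image]
  constructor
  · rintro ⟨hk, hjump⟩
    obtain ⟨s, hs, hsk⟩ := (bnr_eq_mul_bnr_add_one_iff hn hp (mem_Icc.mp hk).1).mp hjump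
    exact ⟨s, hs, by omega⟩
  · rintro ⟨s, hs, rfl⟩
    have hsn : p ^ s ≤ n := Nat.le_of_dvd (Nat.pos_of_ne_zero hn)
      ((hp.pow_dvd_iff_le_factorization hn).mpr (mem_Icc.mp hs).2)
    have hs2 : 2 ≤ p ^ s := hp.two_le.trans (Nat.le_self_pow (by grind) p)
    exact ⟨mem_Icc.mpr ⟨by omega, by omega⟩,
      (bnr_eq_mul_bnr_add_one_iff hn hp (by omega)).mpr ⟨s, hs, by omega⟩⟩

theorem bnr_jump_count_general (n : ℕ) (p : ℕ) (hp : p.Prime) :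
    ((Finset.Icc 1 (n - 1)).filter (fun k => bnr n k = p * bnr n (k + 1))).card =
      n.factorization p := by
  obtain rfl | hn := eq_or_ne n 0
  · simp
  rw [filter_bnr_eq_mul_bnr_add_one hn hp,
    card_image_of_injective _ (Nat.pow_sub_one_injective hp.one_lt),
    Nat.card_Icc, Nat.add_sub_cancel]

/-- For a prime `p`, the number of indices `1 ≤ k ≤ n-1` with `b_{n,k} = p·b_{n,k+1}`
equals the `p`-adic valuation of `n`. -/
theorem bnr_jump_count (n : ℕ) (hn : 2 ≤ n) (p : ℕ) (hp : p.Prime) :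
    ((Finset.Icc 1 (n - 1)).filter (fun k => bnr n k = p * bnr n (k + 1))).card =
      n.factorization p :=
  bnr_jump_count_general n p hp
end
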